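/- arXiv:1809.08619 — 2 statements merged into one kernel-verified Lean document; each statement's English description precedes it below -/
import Mathlib

section
/- Let A be a 2×2 real matrix with |det A| = 1, and identify ℙ(ℝ²) with the circle 𝕊¹ = ℝ mod π via θ ↦ span(e^{iθ}), so that A induces a map θ ↦ A(θ) on 𝕊¹. Then there exists θ₀ ∈ 𝕊¹ such that for every ε > 0 and all θ₁, θ₂ ∈ 𝕊¹ with dist(θ₁,θ₀) ≥ ε and dist(θ₂,θ₀) ≥ ε (distance in ℝ mod π), one has dist(A(θ₁), A(θ₂)) ≤ 2π³/(‖A‖² ε²), where ‖A‖ is the operator norm of A on Euclidean ℝ². -/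
open MeasureTheory Filter
open scoped ENNReal

/-- The operator norm of a real `d × d` matrix acting on Euclidean space. -/
noncomputable def opNorm {d : ℕ} (M : Matrix (Fin d) (Fin d) ℝ) : ℝ :=
  ‖LinearMap.toContinuousLinearMap (Matrix.toEuclideanLin M)‖

/-- The unit vector `e^{iθ} = (cos θ, sin θ)` in `ℝ²`. -/
noncomputable def uvec (θ : ℝ) : Fin 2 → ℝ := ![Real.cos θ, Real.sin θ]

/-- The Euclidean norm of a vector in `ℝ²`. -/
noncomputable def enorm2 (v : Fin 2 → ℝ) : ℝ := Real.sqrt (v 0 ^ 2 + v 1 ^ 2)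

/-! The squared stretch `|A e^{iθ}|²` is a trigonometric polynomial `p + q cos (2θ - α)` with
`0 ≤ q ≤ p`, whose maximum `p + q` dominates `‖A‖²`; hence `|A e^{iθ}| ≥ ‖A‖ |sin (θ - θ₀)|`,
where `θ₀` is the direction of least stretch. If `A e^{iθⱼ} = cⱼ e^{iφⱼ}`, comparing signed areas
gives `c₁ c₂ sin (φ₁ - φ₂) = det A · sin (θ₁ - θ₂)`, so `|sin (φ₁ - φ₂)| ≤ 1 / (|c₁| |c₂|)`.
Jordan's inequality `2x/π ≤ sin x` on `[0, π/2]` converts both sine bounds into distances in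
`ℝ mod π`. -/

open Real Matrix

lemma two_div_pi_mul_dist_le_abs_sin (x y : ℝ) :
    2 / π * dist (x : AddCircle π) (y : AddCircle π) ≤ |sin (x - y)| := by
  rw [dist_eq_norm, ← AddCircle.coe_sub, AddCircle.norm_eq]
  set t := x - y - round (π⁻¹ * (x - y)) * π
  have ht : |t| ≤ π / 2 := by
    have h := AddCircle.norm_le_half_period (p := π) (x := ((x - y : ℝ) : AddCircle π)) pi_ne_zero
    rwa [AddCircle.norm_eq, abs_of_pos pi_pos] at h
  have hsin : |sin (x - y)| = |sin t| := by
    rw [sin_sub_int_mul_pi, abs_mul, abs_neg_one_zpow, one_mul]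
  rw [hsin, abs_sin_eq_sin_abs_of_abs_le_pi (by linarith [pi_pos])]
  exact mul_le_sin (abs_nonneg t) ht

lemma enorm2_nonneg (v : Fin 2 → ℝ) : 0 ≤ enorm2 v := sqrt_nonneg _

lemma enorm2_eq_norm (v : Fin 2 → ℝ) : enorm2 v = ‖WithLp.toLp 2 v‖ := by
  simp [enorm2, EuclideanSpace.norm_eq, Fin.sum_univ_two]

lemma enorm2_smul_uvec (c θ : ℝ) : enorm2 (c • uvec θ) = |c| := by
  simp [enorm2, uvec, mul_pow, ← mul_add, sqrt_sq_eq_abs]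

lemma exists_eq_enorm2_smul_uvec (v : Fin 2 → ℝ) : ∃ α, v = enorm2 v • uvec α := by
  set z : ℂ := ⟨v 0, v 1⟩
  have hz : ‖z‖ = enorm2 v := by
    rw [Complex.norm_def, Complex.normSq_mk, enorm2]; ring_nf
  refine ⟨Complex.arg z, funext fun i => ?_⟩
  fin_cases i
  · show v 0 = enorm2 v * cos (Complex.arg z)
    rw [← hz, Complex.norm_mul_cos_arg]
  · show v 1 = enorm2 v * sin (Complex.arg z)
    rw [← hz, Complex.norm_mul_sin_arg]

lemma norm_toEuclideanLin_apply (A : Matrix (Fin 2) (Fin 2) ℝ) (x : EuclideanSpace ℝ (Fin 2)) :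
    ‖LinearMap.toContinuousLinearMap (toEuclideanLin A) x‖ = enorm2 (A *ᵥ x.ofLp) := by
  rw [enorm2_eq_norm]; rfl

lemma opNorm_nonneg {d : ℕ} (M : Matrix (Fin d) (Fin d) ℝ) : 0 ≤ opNorm M := norm_nonneg _

lemma opNorm_le_of_forall_uvec {A : Matrix (Fin 2) (Fin 2) ℝ} {C : ℝ} (hC : 0 ≤ C)
    (h : ∀ θ, enorm2 (A *ᵥ uvec θ) ≤ C) : opNorm A ≤ C := by
  refine ContinuousLinearMap.opNorm_le_of_unit_norm hC fun x hx => ?_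
  obtain ⟨α, hα⟩ := exists_eq_enorm2_smul_uvec x.ofLp
  rw [enorm2_eq_norm, WithLp.toLp_ofLp, hx, one_smul] at hα
  rw [norm_toEuclideanLin_apply, hα]
  exact h α

lemma opNorm_pos {d : ℕ} {M : Matrix (Fin d) (Fin d) ℝ} (hM : M ≠ 0) : 0 < opNorm M := by
  refine (norm_nonneg _).lt_of_ne' ?_
  simpa [opNorm] using hM

lemma exists_enorm2_mulVec_uvec_sq (A : Matrix (Fin 2) (Fin 2) ℝ) :
    ∃ p q α : ℝ, 0 ≤ q ∧ ∀ θ, enorm2 (A *ᵥ uvec θ) ^ 2 = p + q * cos (2 * θ - α) := by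
  -- `(q cos α, q sin α)` is the polar form of the coefficients of `cos 2θ` and `sin 2θ`.
  obtain ⟨α, hα⟩ := exists_eq_enorm2_smul_uvec
    ![(A 0 0 ^ 2 + A 1 0 ^ 2 - A 0 1 ^ 2 - A 1 1 ^ 2) / 2, A 0 0 * A 0 1 + A 1 0 * A 1 1]
  set q := enorm2 ![(A 0 0 ^ 2 + A 1 0 ^ 2 - A 0 1 ^ 2 - A 1 1 ^ 2) / 2,
    A 0 0 * A 0 1 + A 1 0 * A 1 1]
  have hcos := congrFun hα 0
  have hsin := congrFun hα 1
  simp only [uvec, Pi.smul_apply, smul_eq_mul, cons_val_zero, cons_val_one] at hcos hsin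
  refine ⟨(A 0 0 ^ 2 + A 0 1 ^ 2 + A 1 0 ^ 2 + A 1 1 ^ 2) / 2, q, α, sqrt_nonneg _, fun θ => ?_⟩
  rw [enorm2, sq_sqrt (by positivity), cos_sub, cos_two_mul, sin_two_mul]
  simp only [uvec, mulVec, dotProduct, Fin.sum_univ_two, cons_val_zero, cons_val_one]
  linear_combination (A 0 1 ^ 2 + A 1 1 ^ 2) * sin_sq_add_cos_sq θ
    + (2 * cos θ ^ 2 - 1) * hcos + 2 * sin θ * cos θ * hsin

lemma exists_opNorm_mul_abs_sin_le (A : Matrix (Fin 2) (Fin 2) ℝ) :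
    ∃ θ₀, ∀ θ, opNorm A * |sin (θ - θ₀)| ≤ enorm2 (A *ᵥ uvec θ) := by
  obtain ⟨p, q, α, hq, hform⟩ := exists_enorm2_mulVec_uvec_sq A
  -- The stretch is least at `θ = α / 2 + π / 2`, where it equals `p - q`.
  have hqp : q ≤ p := by
    have h := hform (α / 2 + π / 2)
    rw [show 2 * (α / 2 + π / 2) - α = π by ring, cos_pi] at h
    nlinarith [sq_nonneg (enorm2 (A *ᵥ uvec (α / 2 + π / 2)))]
  have hN : opNorm A ^ 2 ≤ p + q := by
    refine (Real.le_sqrt (opNorm_nonneg A) (by linarith)).1 <|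
      opNorm_le_of_forall_uvec (sqrt_nonneg _) fun θ => ?_
    rw [Real.le_sqrt (enorm2_nonneg _) (by linarith), hform]
    nlinarith [cos_le_one (2 * θ - α)]
  refine ⟨α / 2 + π / 2, fun θ => ?_⟩
  have hsin : sin (θ - (α / 2 + π / 2)) = -cos (θ - α / 2) := by
    rw [← sub_sub, sin_sub_pi_div_two]
  have hcos : cos (2 * θ - α) = 2 * cos (θ - α / 2) ^ 2 - 1 := by
    rw [← cos_two_mul]; ring_nf
  refine (pow_le_pow_iff_left₀ (mul_nonneg (opNorm_nonneg A) (abs_nonneg _)) (enorm2_nonneg _)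
    two_ne_zero).1 ?_
  rw [hform, mul_pow, sq_abs, hsin, neg_sq, hcos]
  nlinarith [mul_nonneg (sub_nonneg.2 hqp) (sub_nonneg.2 (cos_sq_le_one (θ - α / 2))),
    mul_le_mul_of_nonneg_right hN (sq_nonneg (cos (θ - α / 2)))]

lemma mul_mul_sin_sub_eq_det_mul_sin_sub {A : Matrix (Fin 2) (Fin 2) ℝ} {θ₁ θ₂ φ₁ φ₂ c₁ c₂ : ℝ}
    (h₁ : A *ᵥ uvec θ₁ = c₁ • uvec φ₁) (h₂ : A *ᵥ uvec θ₂ = c₂ • uvec φ₂) :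
    c₁ * c₂ * sin (φ₁ - φ₂) = A.det * sin (θ₁ - θ₂) := by
  have hcross : ∀ u v : Fin 2 → ℝ,
      (A *ᵥ u) 1 * (A *ᵥ v) 0 - (A *ᵥ u) 0 * (A *ᵥ v) 1 = A.det * (u 1 * v 0 - u 0 * v 1) := by
    intro u v
    simp only [mulVec, dotProduct, Fin.sum_univ_two, det_fin_two]
    ring
  have h := hcross (uvec θ₁) (uvec θ₂)
  rw [h₁, h₂] at h
  simp only [uvec, Pi.smul_apply, smul_eq_mul, cons_val_zero, cons_val_one] at h
  rw [sin_sub, sin_sub]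
  linear_combination h

lemma two_div_pi_mul_mul_opNorm_le_abs {A : Matrix (Fin 2) (Fin 2) ℝ} {θ₀ θ φ c ε : ℝ}
    (hstretch : ∀ θ, opNorm A * |sin (θ - θ₀)| ≤ enorm2 (A *ᵥ uvec θ))
    (h : A *ᵥ uvec θ = c • uvec φ) (hd : ε ≤ dist (θ : AddCircle π) θ₀) :
    2 / π * ε * opNorm A ≤ |c| :=
  calc 2 / π * ε * opNorm A ≤ |sin (θ - θ₀)| * opNorm A := by
        refine mul_le_mul_of_nonneg_right ?_ (opNorm_nonneg A)
        exact (mul_le_mul_of_nonneg_left hd (by positivity)).trans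
          (two_div_pi_mul_dist_le_abs_sin θ θ₀)
    _ ≤ enorm2 (A *ᵥ uvec θ) := by rw [mul_comm]; exact hstretch θ
    _ = |c| := by rw [h, enorm2_smul_uvec]

lemma dist_le_of_mul_mul_abs_sin_le {φ₁ φ₂ c₁ c₂ m : ℝ} (hm : 0 < m) (h₁ : m ≤ |c₁|)
    (h₂ : m ≤ |c₂|) (h : |c₁| * |c₂| * |sin (φ₁ - φ₂)| ≤ 1) :
    dist (φ₁ : AddCircle π) φ₂ ≤ π / (2 * m ^ 2) := by
  have hjordan := two_div_pi_mul_dist_le_abs_sin φ₁ φ₂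
  rw [div_mul_eq_mul_div, div_le_iff₀ pi_pos] at hjordan
  have hc : m ^ 2 ≤ |c₁| * |c₂| := by rw [sq]; exact mul_le_mul h₁ h₂ hm.le (abs_nonneg c₁)
  set d := dist (φ₁ : AddCircle π) φ₂
  rw [le_div_iff₀ (by positivity)]
  calc d * (2 * m ^ 2) ≤ 2 * d * (|c₁| * |c₂|) := by nlinarith [show 0 ≤ d from dist_nonneg]
    _ ≤ |sin (φ₁ - φ₂)| * π * (|c₁| * |c₂|) := by gcongr
    _ ≤ π := by nlinarith [pi_pos]

/-- For a `2 × 2` real matrix with `|det A| = 1`, there is a direction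
`θ₀` such that the projective action of `A` contracts the complement of the `ε`-neighbourhood
of `θ₀` (in `ℝ mod π`) to a set of diameter at most `2π³/(‖A‖²ε²)`. -/
theorem stmt8 (A : Matrix (Fin 2) (Fin 2) ℝ) (hdet : |A.det| = 1) :
    ∃ θ₀ : ℝ, ∀ ε > (0 : ℝ), ∀ θ₁ θ₂ φ₁ φ₂ : ℝ,
      (∃ c : ℝ, A.mulVec (uvec θ₁) = c • uvec φ₁) →
      (∃ c : ℝ, A.mulVec (uvec θ₂) = c • uvec φ₂) →
      ε ≤ dist (θ₁ : AddCircle Real.pi) (θ₀ : AddCircle Real.pi) →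
      ε ≤ dist (θ₂ : AddCircle Real.pi) (θ₀ : AddCircle Real.pi) →
      dist (φ₁ : AddCircle Real.pi) (φ₂ : AddCircle Real.pi) ≤
        2 * Real.pi ^ 3 / (opNorm A ^ 2 * ε ^ 2) := by
  obtain ⟨θ₀, hstretch⟩ := exists_opNorm_mul_abs_sin_le A
  have hN : 0 < opNorm A := opNorm_pos fun h => by simp [h] at hdet
  refine ⟨θ₀, fun ε hε θ₁ θ₂ φ₁ φ₂ ⟨c₁, h₁⟩ ⟨c₂, h₂⟩ hd₁ hd₂ => ?_⟩
  have hsin : |c₁| * |c₂| * |sin (φ₁ - φ₂)| ≤ 1 := by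
    rw [← abs_mul, ← abs_mul, mul_mul_sin_sub_eq_det_mul_sin_sub h₁ h₂, abs_mul, hdet, one_mul]
    exact abs_sin_le_one _
  calc dist (φ₁ : AddCircle π) φ₂ ≤ π / (2 * (2 / π * ε * opNorm A) ^ 2) :=
        dist_le_of_mul_mul_abs_sin_le (by positivity)
          (two_div_pi_mul_mul_opNorm_le_abs hstretch h₁ hd₁)
          (two_div_pi_mul_mul_opNorm_le_abs hstretch h₂ hd₂) hsin
    _ = π ^ 3 / (8 * (opNorm A ^ 2 * ε ^ 2)) := by
        field_simp
        ring
    _ ≤ 2 * π ^ 3 / (opNorm A ^ 2 * ε ^ 2) := by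
        rw [div_le_div_iff₀ (by positivity) (by positivity)]
        nlinarith [pow_pos pi_pos 3, pow_pos (mul_pos hN hε) 2]
end

section
/- Let A be an invertible 2×2 real matrix, and let h₀ = e^{iθ₀} be a unit vector attaining the minimum of ‖Ah‖ over all unit vectors h ∈ ℝ². Then for every ε > 0 and every unit vector h = e^{iθ} with dist(θ, θ₀) ≥ ε in ℝ mod π, one has ‖Ah‖ ≥ ‖A‖ε/(2π), where ‖A‖ is the operator norm of A. -/
open MeasureTheory Filter
open scoped ENNReal

/-!
Put `e₀ = e^{iθ₀}` and `e₁ = e^{i(θ₀+π/2)}`. Minimality of `‖Ae₀‖` gives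
`‖Ae₀‖²(1 + s²) ≤ ‖A(e₀ + s e₁)‖²` for every real `s`, a quadratic inequality in `s` without
constant term, so its linear coefficient `2⟪Ae₀, Ae₁⟫` vanishes; also `‖Ae₀‖ ≤ ‖Ae₁‖`.
Pythagoras then gives `‖A(p e₀ + q e₁)‖² = p²‖Ae₀‖² + q²‖Ae₁‖²`, hence `‖A‖ = ‖Ae₁‖` and
`‖A e^{iθ}‖ ≥ |sin (θ - θ₀)| ‖A‖`. Finally Jordan's inequality bounds `|sin (θ - θ₀)|` below by
`2/π` times the distance of `θ` and `θ₀` in `ℝ mod π`, and `2ε/π ≥ ε/(2π)`.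
-/

open Real InnerProductSpace WithLp Matrix

lemma ContinuousLinearMap.mul_norm_le_norm_apply {E F : Type*} [NormedAddCommGroup E]
    [NormedSpace ℝ E] [NormedAddCommGroup F] [NormedSpace ℝ F] (T : E →L[ℝ] F) {c : ℝ}
    (h : ∀ x, ‖x‖ = 1 → c ≤ ‖T x‖) (x : E) : c * ‖x‖ ≤ ‖T x‖ := by
  rcases eq_or_ne x 0 with rfl | hx
  · simp
  have hx' : 0 < ‖x‖ := norm_pos_iff.2 hx
  have := h (‖x‖⁻¹ • x) (by rw [norm_smul, norm_inv, norm_norm, inv_mul_cancel₀ hx'.ne'])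
  rw [map_smul, norm_smul, norm_inv, norm_norm, inv_mul_eq_div, le_div_iff₀ hx'] at this
  exact this

section MinimalStretch

variable {E F : Type*} [NormedAddCommGroup E] [InnerProductSpace ℝ E]
  [NormedAddCommGroup F] [InnerProductSpace ℝ F]

lemma norm_smul_add_smul_sq_of_inner_eq_zero {u v : F} (h : ⟪u, v⟫_ℝ = 0) (p q : ℝ) :
    ‖p • u + q • v‖ ^ 2 = p ^ 2 * ‖u‖ ^ 2 + q ^ 2 * ‖v‖ ^ 2 := by
  rw [sq, norm_add_sq_eq_norm_sq_add_norm_sq_real (by simp [inner_smul_left, inner_smul_right, h]),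
    norm_smul, norm_smul, Real.norm_eq_abs, Real.norm_eq_abs]
  nlinarith [sq_abs p, sq_abs q]

variable (T : E →L[ℝ] F) {e₀ e₁ : E} (he₀ : ‖e₀‖ = 1) (he₁ : ‖e₁‖ = 1) (h01 : ⟪e₀, e₁⟫_ℝ = 0)
  (hmin : ∀ x, ‖x‖ = 1 → ‖T e₀‖ ≤ ‖T x‖)
include he₀ he₁ h01 hmin

lemma inner_apply_eq_zero_of_forall_norm_apply_le : ⟪T e₀, T e₁⟫_ℝ = 0 := by
  have hq : ∀ s : ℝ, 0 ≤ (‖T e₁‖ ^ 2 - ‖T e₀‖ ^ 2) * (s * s) + 2 * ⟪T e₀, T e₁⟫_ℝ * s + 0 := by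
    intro s
    have h := T.mul_norm_le_norm_apply hmin (e₀ + s • e₁)
    have hx : ‖e₀ + s • e₁‖ ^ 2 = 1 + s ^ 2 := by
      simpa [he₀, he₁] using norm_smul_add_smul_sq_of_inner_eq_zero h01 1 s
    have hTx : ‖T (e₀ + s • e₁)‖ ^ 2 =
        ‖T e₀‖ ^ 2 + 2 * s * ⟪T e₀, T e₁⟫_ℝ + s ^ 2 * ‖T e₁‖ ^ 2 := by
      rw [map_add, map_smul, norm_add_sq_real, inner_smul_right, norm_smul, mul_pow,
        Real.norm_eq_abs, sq_abs]
      ring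
    have := pow_le_pow_left₀ (by positivity) h 2
    rw [mul_pow, hx, hTx] at this
    nlinarith
  have := discrim_le_zero hq
  rw [discrim] at this
  nlinarith [sq_nonneg ⟪T e₀, T e₁⟫_ℝ]

lemma norm_apply_smul_add_smul_sq (p q : ℝ) :
    ‖T (p • e₀ + q • e₁)‖ ^ 2 = p ^ 2 * ‖T e₀‖ ^ 2 + q ^ 2 * ‖T e₁‖ ^ 2 := by
  rw [map_add, map_smul, map_smul, norm_smul_add_smul_sq_of_inner_eq_zero
    (inner_apply_eq_zero_of_forall_norm_apply_le T he₀ he₁ h01 hmin)]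

lemma abs_mul_norm_apply_le_norm_apply_smul_add_smul (p q : ℝ) :
    |q| * ‖T e₁‖ ≤ ‖T (p • e₀ + q • e₁)‖ := by
  refine (pow_le_pow_iff_left₀ (by positivity) (norm_nonneg _) two_ne_zero).1 ?_
  rw [norm_apply_smul_add_smul_sq T he₀ he₁ h01 hmin, mul_pow, sq_abs]
  nlinarith [sq_nonneg p, sq_nonneg ‖T e₀‖]

lemma opNorm_eq_norm_apply_of_forall_norm_apply_le (hspan : Submodule.span ℝ {e₀, e₁} = ⊤) :
    ‖T‖ = ‖T e₁‖ := by
  refine le_antisymm (T.opNorm_le_bound (norm_nonneg _) fun x ↦ ?_) ?_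
  · obtain ⟨p, q, rfl⟩ := Submodule.mem_span_pair.1 (hspan ▸ Submodule.mem_top (x := x))
    refine (pow_le_pow_iff_left₀ (norm_nonneg _) (by positivity) two_ne_zero).1 ?_
    rw [mul_pow, norm_apply_smul_add_smul_sq T he₀ he₁ h01 hmin,
      norm_smul_add_smul_sq_of_inner_eq_zero h01, he₀, he₁]
    have := pow_le_pow_left₀ (norm_nonneg _) (hmin e₁ he₁) 2
    nlinarith [sq_nonneg p]
  · simpa [he₁] using T.le_opNorm e₁

end MinimalStretch

lemma two_div_pi_mul_dist_le_abs_sin_sub (θ θ₀ : ℝ) :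
    2 / π * dist (θ : AddCircle π) θ₀ ≤ |sin (θ - θ₀)| := by
  rw [dist_eq_norm, ← AddCircle.coe_sub]
  have hhalf : ‖((θ - θ₀ : ℝ) : AddCircle π)‖ ≤ π / 2 := by
    simpa [abs_of_pos pi_pos] using AddCircle.norm_le_half_period π (x := ↑(θ - θ₀)) pi_ne_zero
  rw [AddCircle.norm_eq] at hhalf ⊢
  set ψ := θ - θ₀ - round (π⁻¹ * (θ - θ₀)) * π
  have hsin : |sin (θ - θ₀)| = |sin ψ| := by
    rw [sin_sub_int_mul_pi, abs_mul, abs_neg_one_zpow, one_mul]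
  rw [hsin, abs_sin_eq_sin_abs_of_abs_le_pi (by linarith [pi_pos])]
  exact mul_le_sin (abs_nonneg ψ) hhalf

lemma enorm2_eq_norm_toLp (v : Fin 2 → ℝ) : enorm2 v = ‖toLp 2 v‖ := by
  simp [enorm2, EuclideanSpace.norm_eq, Fin.sum_univ_two]

lemma toLp_uvec_add (θ φ : ℝ) :
    toLp 2 (uvec (θ + φ)) = cos φ • toLp 2 (uvec θ) + sin φ • toLp 2 (uvec (θ + π / 2)) := by
  ext i
  fin_cases i <;> simp [uvec, cos_add, sin_add] <;> ring

lemma norm_toLp_uvec (θ : ℝ) : ‖toLp 2 (uvec θ)‖ = 1 := by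
  simp [← enorm2_eq_norm_toLp, enorm2, uvec]

lemma inner_toLp_uvec_add_pi_div_two (θ : ℝ) :
    ⟪toLp 2 (uvec θ), toLp 2 (uvec (θ + π / 2))⟫_ℝ = 0 := by
  simp [PiLp.inner_apply, Fin.sum_univ_two, uvec, cos_add_pi_div_two, sin_add_pi_div_two]
  ring

lemma span_toLp_uvec_pair (θ : ℝ) :
    Submodule.span ℝ {toLp 2 (uvec θ), toLp 2 (uvec (θ + π / 2))} = ⊤ := by
  refine Submodule.eq_top_iff'.2 fun x ↦ Submodule.mem_span_pair.2
    ⟨x 0 * cos θ + x 1 * sin θ, -x 0 * sin θ + x 1 * cos θ, ?_⟩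
  ext i
  fin_cases i
  · simp [uvec, cos_add_pi_div_two, sin_add_pi_div_two]
    linear_combination x 0 * sin_sq_add_cos_sq θ
  · simp [uvec, cos_add_pi_div_two, sin_add_pi_div_two]
    linear_combination x 1 * sin_sq_add_cos_sq θ

/-- If `h₀ = e^{iθ₀}` minimizes `‖Ah‖` over unit vectors, then every unit
vector whose angle is at least `ε` away from `θ₀` (in `ℝ mod π`) satisfies
`‖Ah‖ ≥ ‖A‖ε/(2π)`. -/
theorem stmt10 (A : GL (Fin 2) ℝ) (θ₀ : ℝ)
    (hmin : ∀ h : Fin 2 → ℝ, enorm2 h = 1 →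
      enorm2 ((A : Matrix (Fin 2) (Fin 2) ℝ).mulVec (uvec θ₀)) ≤
        enorm2 ((A : Matrix (Fin 2) (Fin 2) ℝ).mulVec h)) :
    ∀ ε > (0 : ℝ), ∀ θ : ℝ,
      ε ≤ dist (θ : AddCircle Real.pi) (θ₀ : AddCircle Real.pi) →
      opNorm (A : Matrix (Fin 2) (Fin 2) ℝ) * ε / (2 * Real.pi) ≤
        enorm2 ((A : Matrix (Fin 2) (Fin 2) ℝ).mulVec (uvec θ)) := by
  intro ε hε θ hdist
  set T := LinearMap.toContinuousLinearMap (Matrix.toEuclideanLin (A : Matrix (Fin 2) (Fin 2) ℝ))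
  have hT (v : Fin 2 → ℝ) : enorm2 ((A : Matrix (Fin 2) (Fin 2) ℝ) *ᵥ v) = ‖T (toLp 2 v)‖ :=
    enorm2_eq_norm_toLp _
  have hmin' (x : EuclideanSpace ℝ (Fin 2)) (hx : ‖x‖ = 1) :
      ‖T (toLp 2 (uvec θ₀))‖ ≤ ‖T x‖ := by
    simpa only [hT, toLp_ofLp] using hmin (ofLp x) (by rwa [enorm2_eq_norm_toLp, toLp_ofLp])
  have horth := inner_toLp_uvec_add_pi_div_two θ₀
  have hsin : ε / (2 * π) ≤ |sin (θ - θ₀)| := calc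
    ε / (2 * π) ≤ 2 / π * ε := by
      rw [div_le_iff₀ (by positivity)]
      field_simp
      nlinarith [pi_gt_three]
    _ ≤ 2 / π * dist (θ : AddCircle π) θ₀ := by gcongr
    _ ≤ |sin (θ - θ₀)| := two_div_pi_mul_dist_le_abs_sin_sub θ θ₀
  have huvec := toLp_uvec_add θ₀ (θ - θ₀)
  rw [add_sub_cancel] at huvec
  calc opNorm (A : Matrix (Fin 2) (Fin 2) ℝ) * ε / (2 * π)
      = ε / (2 * π) * ‖T (toLp 2 (uvec (θ₀ + π / 2)))‖ := by
        rw [opNorm, opNorm_eq_norm_apply_of_forall_norm_apply_le T (norm_toLp_uvec _)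
          (norm_toLp_uvec _) horth hmin' (span_toLp_uvec_pair θ₀)]
        ring
    _ ≤ |sin (θ - θ₀)| * ‖T (toLp 2 (uvec (θ₀ + π / 2)))‖ := by gcongr
    _ ≤ enorm2 ((A : Matrix (Fin 2) (Fin 2) ℝ) *ᵥ uvec θ) := by
        rw [hT, huvec]
        exact abs_mul_norm_apply_le_norm_apply_smul_add_smul T (norm_toLp_uvec _)
          (norm_toLp_uvec _) horth hmin' _ _
end
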